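/- For an admissible column C with split sets I (doubled unbarred letters) and J, the set of entries of Φ(C) equals (J ∪ -J ∪ C) \ (I ∪ -I), where Φ(C) is the column whose unbarred entries are those of ℓC and whose barred entries are those of rC. In particular x and -x both occur in Φ(C) if and only if x ∈ J or -x ∈ J, and an entry x occurs in Φ(C) with -x absent if and only if x occurs in C with -x absent. -/

import Mathlib

/-- The alphabet `[±n] = {1 < 2 < ⋯ < n < n̄ < ⋯ < 1̄}` is encoded as `{1, …, 2n} ⊆ ℕ`
with the usual order, the barred letter `ī` being encoded as `2n+1-i`. -/
def bar (n x : ℕ) : ℕ := 2 * n + 1 - x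

/-- A column over `[±n]`: a strictly increasing list with entries in `{1, …, 2n}`. -/
def IsColumn (n : ℕ) (C : List ℕ) : Prop :=
  C.Chain' (· < ·) ∧ ∀ x ∈ C, 1 ≤ x ∧ x ≤ 2 * n

/-- The one column condition (1CC): for every unbarred `i` with both `i` and `ī` in `C`,
the number of entries `x` with `x ≤ i` or `x ≥ ī` is at most `i`. -/
def OCC (n : ℕ) (C : List ℕ) : Prop :=
  ∀ i, 1 ≤ i → i ≤ n → i ∈ C → bar n i ∈ C →
    C.countP (fun x => decide (x ≤ i ∨ bar n i ≤ x)) ≤ i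

/-- The set `I` of unbarred letters `z` such that both `z` and `z̄` occur in `C`,
listed in decreasing order `z₁ > z₂ > ⋯ > z_r`. -/
def Ilist (n : ℕ) (C : List ℕ) : List ℕ :=
  ((List.range (n + 1)).filter (fun z => decide (1 ≤ z ∧ z ∈ C ∧ bar n z ∈ C))).reverse

/-- The greatest unbarred letter `t < bound` with `t ∉ C` and `t̄ ∉ C`, if any. -/
def pickBelow (n : ℕ) (C : List ℕ) (bound : ℕ) : Option ℕ :=
  ((List.range bound).filter (fun t => decide (1 ≤ t ∧ t ≤ n ∧ t ∉ C ∧ bar n t ∉ C))).max?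

/-- The greedy construction of the set `J = {t₁ > ⋯ > t_r}` of Definition of splitting:
`t₁` is the greatest letter `< z₁` with `t₁, t̄₁ ∉ C` and `tᵢ` is the greatest letter
`< min (tᵢ₋₁, zᵢ)` with `tᵢ, t̄ᵢ ∉ C`; returns `none` if at some stage no letter exists. -/
def splitJ (n : ℕ) (C : List ℕ) : List ℕ → ℕ → Option (List ℕ)
  | [], _ => some []
  | z :: zs, bound =>
    match pickBelow n C (min bound z) with
    | none => none
    | some t => (splitJ n C zs t).map (t :: ·)

def JlistOpt (n : ℕ) (C : List ℕ) : Option (List ℕ) := splitJ n C (Ilist n C) (n + 1)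

/-- `C` can be split: the set `J` of the splitting definition exists. -/
def CanSplit (n : ℕ) (C : List ℕ) : Prop := (JlistOpt n C).isSome = true

/-- The set `J = {t₁ > ⋯ > t_r}` (empty if `C` cannot be split). -/
def Jlist (n : ℕ) (C : List ℕ) : List ℕ := (JlistOpt n C).getD []

def sortCol (L : List ℕ) : List ℕ := L.mergeSort (· ≤ ·)

/-- The right column `rC`: replace each barred `z̄ᵢ` (for `zᵢ ∈ I`) by `t̄ᵢ` and reorder. -/
def rCol (n : ℕ) (C : List ℕ) : List ℕ :=
  sortCol ((C.filter (fun x => decide (x ∉ (Ilist n C).map (bar n)))) ++ (Jlist n C).map (bar n))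

/-- The left column `ℓC`: replace each unbarred `zᵢ ∈ I` by `tᵢ` and reorder. -/
def lCol (n : ℕ) (C : List ℕ) : List ℕ :=
  sortCol ((C.filter (fun x => decide (x ∉ Ilist n C))) ++ Jlist n C)

/-- `Φ(C)`: the column of the same size whose unbarred entries are taken from `ℓC`
and whose barred entries are taken from `rC`. -/
def PhiCol (n : ℕ) (C : List ℕ) : List ℕ :=
  sortCol ((lCol n C).filter (fun x => decide (x ≤ n)) ++
    (rCol n C).filter (fun x => decide (n < x)))

/-!
The letters of `J` are unbarred and, together with their bars, avoid `C`, while `I ∪ Ī` consists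
exactly of the letters `x` of `C` with `x̄ ∈ C`. Hence a letter `x` lies in `Φ(C)` iff `x ∈ J`,
`x̄ ∈ J`, or `x ∈ C` with `x̄ ∉ C`; the last two claims compare this description for `x` and `x̄`.
-/

section PhiCol

variable {n : ℕ} {C : List ℕ}

lemma bar_bar {x : ℕ} (hx : x ≤ 2 * n + 1) : bar n (bar n x) = x := by
  unfold bar; omega

lemma pickBelow_spec {b t : ℕ} (h : pickBelow n C b = some t) :
    1 ≤ t ∧ t ≤ n ∧ t ∉ C ∧ bar n t ∉ C := by
  simpa using (List.mem_filter.mp (List.max?_mem h)).2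

lemma splitJ_spec : ∀ {zs : List ℕ} {b : ℕ} {L : List ℕ}, splitJ n C zs b = some L →
    ∀ t ∈ L, 1 ≤ t ∧ t ≤ n ∧ t ∉ C ∧ bar n t ∉ C
  | [], _, _, h => by
    obtain rfl : [] = _ := Option.some.inj h
    simp
  | z :: zs, b, L, h => by
    rw [splitJ] at h
    split at h
    · cases h
    · rename_i t ht
      obtain ⟨L', hL', rfl⟩ := Option.map_eq_some_iff.mp h
      exact List.forall_mem_cons.mpr ⟨pickBelow_spec ht, splitJ_spec hL'⟩

lemma Jlist_spec {t : ℕ} (ht : t ∈ Jlist n C) : 1 ≤ t ∧ t ≤ n ∧ t ∉ C ∧ bar n t ∉ C := by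
  unfold Jlist at ht
  cases h : JlistOpt n C with
  | none => simp [h] at ht
  | some L =>
    rw [h, Option.getD_some] at ht
    exact splitJ_spec h t ht

lemma notMem_and_bar_notMem_of_bar_mem_Jlist {x : ℕ} (hx : x ≤ 2 * n + 1)
    (h : bar n x ∈ Jlist n C) : x ∉ C ∧ bar n x ∉ C := by
  have := (Jlist_spec h).2.2
  rw [bar_bar hx] at this
  exact this.symm

lemma mem_Ilist_iff {x : ℕ} : x ∈ Ilist n C ↔ 1 ≤ x ∧ x ≤ n ∧ x ∈ C ∧ bar n x ∈ C := by
  simp only [Ilist, List.mem_reverse, List.mem_filter, List.mem_range, decide_eq_true_eq]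
  constructor
  · rintro ⟨h0, h1, h2, h3⟩; exact ⟨h1, by omega, h2, h3⟩
  · rintro ⟨h1, h2, h3, h4⟩; exact ⟨by omega, h1, h3, h4⟩

lemma mem_map_bar_Ilist_iff {x : ℕ} :
    x ∈ (Ilist n C).map (bar n) ↔ n < x ∧ x ≤ 2 * n ∧ x ∈ C ∧ bar n x ∈ C := by
  simp only [List.mem_map, mem_Ilist_iff]
  constructor
  · rintro ⟨z, ⟨h1, h2, h3, h4⟩, rfl⟩
    rw [bar_bar (by omega)]
    exact ⟨by unfold bar; omega, by unfold bar; omega, h4, h3⟩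
  · rintro ⟨h1, h2, h3, h4⟩
    rw [← bar_bar (n := n) (x := x) (by omega)] at h3
    exact ⟨bar n x, ⟨by unfold bar; omega, by unfold bar; omega, h4, h3⟩, bar_bar (by omega)⟩

lemma mem_map_bar_Jlist_iff {x : ℕ} (hx : x ≤ 2 * n + 1) :
    x ∈ (Jlist n C).map (bar n) ↔ bar n x ∈ Jlist n C := by
  constructor
  · intro h
    obtain ⟨t, ht, rfl⟩ := List.mem_map.mp h
    rwa [bar_bar (by have := (Jlist_spec ht).2.1; omega)]
  · exact fun h => List.mem_map.mpr ⟨bar n x, h, bar_bar hx⟩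

lemma mem_PhiCol_iff {x : ℕ} : x ∈ PhiCol n C ↔
    (x ≤ n ∧ (x ∈ C ∧ x ∉ Ilist n C ∨ x ∈ Jlist n C)) ∨
      (n < x ∧ (x ∈ C ∧ x ∉ (Ilist n C).map (bar n) ∨ x ∈ (Jlist n C).map (bar n))) := by
  simp only [PhiCol, lCol, rCol, sortCol, List.mem_mergeSort, List.mem_append,
    List.mem_filter, decide_eq_true_eq]
  tauto

lemma mem_PhiCol_iff_mem_diff {x : ℕ} : x ∈ PhiCol n C ↔
    (x ∈ Jlist n C ∨ x ∈ (Jlist n C).map (bar n) ∨ x ∈ C) ∧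
      x ∉ Ilist n C ∧ x ∉ (Ilist n C).map (bar n) := by
  have hI : x ∈ Ilist n C → x ≤ n ∧ x ∈ C := fun h =>
    ⟨(mem_Ilist_iff.mp h).2.1, (mem_Ilist_iff.mp h).2.2.1⟩
  have hbI : x ∈ (Ilist n C).map (bar n) → n < x ∧ x ∈ C := fun h =>
    ⟨(mem_map_bar_Ilist_iff.mp h).1, (mem_map_bar_Ilist_iff.mp h).2.2.1⟩
  have hJ : x ∈ Jlist n C → x ≤ n ∧ x ∉ C := fun h =>
    ⟨(Jlist_spec h).2.1, (Jlist_spec h).2.2.1⟩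
  have hbJ : x ∈ (Jlist n C).map (bar n) → n < x ∧ x ∉ C := by
    intro h
    obtain ⟨t, ht, rfl⟩ := List.mem_map.mp h
    obtain ⟨-, ht, -, hbt⟩ := Jlist_spec ht
    exact ⟨by unfold bar; omega, hbt⟩
  rw [mem_PhiCol_iff]
  rcases le_or_gt x n with hx | hx
  · have : ¬ n < x := by omega
    tauto
  · have : ¬ x ≤ n := by omega
    tauto

lemma notMem_Ilist_and_notMem_map_bar_iff {x : ℕ} (hx₁ : 1 ≤ x) (hx₂ : x ≤ 2 * n) :
    x ∉ Ilist n C ∧ x ∉ (Ilist n C).map (bar n) ↔ ¬ (x ∈ C ∧ bar n x ∈ C) := by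
  rw [mem_Ilist_iff, mem_map_bar_Ilist_iff]
  rcases le_or_gt x n with hx | hx
  · have : ¬ n < x := by omega
    tauto
  · have : ¬ x ≤ n := by omega
    tauto

lemma mem_PhiCol_iff_of_le {x : ℕ} (hx₁ : 1 ≤ x) (hx₂ : x ≤ 2 * n) :
    x ∈ PhiCol n C ↔ x ∈ Jlist n C ∨ bar n x ∈ Jlist n C ∨ (x ∈ C ∧ bar n x ∉ C) := by
  have hJ : x ∈ Jlist n C → x ∉ C ∧ bar n x ∉ C := fun h => (Jlist_spec h).2.2
  have hbJ := notMem_and_bar_notMem_of_bar_mem_Jlist (n := n) (C := C) (x := x) (by omega)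
  rw [mem_PhiCol_iff_mem_diff, mem_map_bar_Jlist_iff (by omega),
    notMem_Ilist_and_notMem_map_bar_iff hx₁ hx₂]
  tauto

end PhiCol

theorem phiCol_entries_general (n : ℕ) (C : List ℕ) :
    (∀ x, x ∈ PhiCol n C ↔ ((x ∈ Jlist n C ∨ x ∈ (Jlist n C).map (bar n) ∨ x ∈ C) ∧
      x ∉ Ilist n C ∧ x ∉ (Ilist n C).map (bar n))) ∧
    (∀ x, 1 ≤ x → x ≤ 2 * n →
      ((x ∈ PhiCol n C ∧ bar n x ∈ PhiCol n C) ↔ (x ∈ Jlist n C ∨ bar n x ∈ Jlist n C))) ∧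
    (∀ x, 1 ≤ x → x ≤ 2 * n →
      ((x ∈ PhiCol n C ∧ bar n x ∉ PhiCol n C) ↔ (x ∈ C ∧ bar n x ∉ C))) := by
  refine ⟨fun x => mem_PhiCol_iff_mem_diff, ?_, ?_⟩ <;> intro x hx₁ hx₂
  all_goals
    have hbx₁ : 1 ≤ bar n x := by unfold bar; omega
    have hbx₂ : bar n x ≤ 2 * n := by unfold bar; omega
    have hJ : x ∈ Jlist n C → x ∉ C ∧ bar n x ∉ C := fun h => (Jlist_spec h).2.2
    have hbJ := notMem_and_bar_notMem_of_bar_mem_Jlist (n := n) (C := C) (x := x) (by omega)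
    rw [mem_PhiCol_iff_of_le hx₁ hx₂, mem_PhiCol_iff_of_le hbx₁ hbx₂, bar_bar (by omega)]
    tauto

/-- the set of entries of `Φ(C)` is `(J ∪ J̄ ∪ C) \\ (I ∪ Ī)`; in particular
`x` and `x̄` both occur in `Φ(C)` iff `x ∈ J` or `x̄ ∈ J`, and `x` occurs in `Φ(C)` with
`x̄` absent iff `x` occurs in `C` with `x̄` absent. -/
theorem phiCol_entries (n : ℕ) (C : List ℕ) (hC : IsColumn n C) (hadm : OCC n C) :
    (∀ x, x ∈ PhiCol n C ↔ ((x ∈ Jlist n C ∨ x ∈ (Jlist n C).map (bar n) ∨ x ∈ C) ∧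
      x ∉ Ilist n C ∧ x ∉ (Ilist n C).map (bar n))) ∧
    (∀ x, 1 ≤ x → x ≤ 2 * n →
      ((x ∈ PhiCol n C ∧ bar n x ∈ PhiCol n C) ↔ (x ∈ Jlist n C ∨ bar n x ∈ Jlist n C))) ∧
    (∀ x, 1 ≤ x → x ≤ 2 * n →
      ((x ∈ PhiCol n C ∧ bar n x ∉ PhiCol n C) ↔ (x ∈ C ∧ bar n x ∉ C))) :=
  phiCol_entries_general n C
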